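/- Let A be n×n, B n×m, α k×k, β k×m complex matrices such that A has spectral radius < 1, α has spectral radius ≤ 1, the pair (A,B) is controllable and the pair (α,β) is controllable. Then for every z ∈ ℂ, the block matrix [[zA − I, 0, B],[0, zI − α, β]] has full row rank n + k. -/

import Mathlib

/-!
A vector `(u, v)` in the left kernel of the block matrix satisfies `u (zA - 1) = 0`,
`v (z - α) = 0` and `u B + v β = 0`. If `u ≠ 0` then `z⁻¹` is an eigenvalue of `A`, so `‖z‖ > 1`
and `z` cannot be an eigenvalue of `α`, whence `v = 0`. So one of `u`, `v` vanishes, the other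
is then a left eigenvector annihilating its input matrix, and the Hautus test for the
corresponding controllable pair forces it to vanish as well.
-/

open Matrix

namespace Matrix

variable {ι κ m n K : Type*}

theorem vecMul_injective_iff_rank_eq_card [Field K] [Fintype m] [Fintype n] (M : Matrix m n K) :
    Function.Injective M.vecMul ↔ M.rank = Fintype.card m := by
  rw [vecMul_injective_iff, M.rank_eq_finrank_span_row,
    linearIndependent_iff_card_eq_finrank_span, Set.finrank, eq_comm]

theorem mem_spectrum_of_vecMul_eq_smul [CommRing K] [Fintype ι] [DecidableEq ι]
    {A : Matrix ι ι K} {x : ι → K} {c : K} (hx : x ≠ 0) (h : x ᵥ* A = c • x) :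
    c ∈ spectrum K A := by
  rw [spectrum.mem_iff, Algebra.algebraMap_eq_smul_one]
  refine fun hunit => hx (vecMul_injective_of_isUnit hunit ?_)
  dsimp only
  rw [vecMul_sub, vecMul_smul, vecMul_one, h, sub_self, zero_vecMul]

theorem vecMul_eq_inv_smul_of_vecMul_smul_sub_one_eq_zero [Field K] [Fintype ι] [DecidableEq ι]
    {A : Matrix ι ι K} {x : ι → K} {z : K} (h : x ᵥ* (z • A - 1) = 0) :
    x ᵥ* A = z⁻¹ • x := by
  rw [vecMul_sub, vecMul_smul, vecMul_one, sub_eq_zero] at h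
  rcases eq_or_ne z 0 with rfl | hz
  · rw [zero_smul] at h
    simp [← h]
  · exact ((inv_smul_eq_iff₀ hz).2 h.symm).symm

theorem vecMul_eq_smul_of_vecMul_smul_one_sub_eq_zero [CommRing K] [Fintype ι] [DecidableEq ι]
    {α : Matrix ι ι K} {x : ι → K} {z : K} (h : x ᵥ* (z • 1 - α) = 0) : x ᵥ* α = z • x := by
  rw [vecMul_sub, vecMul_smul, vecMul_one, sub_eq_zero] at h
  exact h.symm

theorem eq_zero_or_eq_zero_of_vecMul_smul_sub_eq_zero [NormedField K] [Fintype ι] [DecidableEq ι]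
    [Fintype κ] [DecidableEq κ] {A : Matrix ι ι K} {α : Matrix κ κ K}
    (hA : ∀ μ ∈ spectrum K A, ‖μ‖ < 1) (hα : ∀ μ ∈ spectrum K α, ‖μ‖ ≤ 1)
    {u : ι → K} {v : κ → K} {z : K}
    (hu : u ᵥ* (z • A - 1) = 0) (hv : v ᵥ* (z • 1 - α) = 0) : u = 0 ∨ v = 0 := by
  by_contra! h
  have hz : z ≠ 0 := by
    rintro rfl
    exact h.1 (by simpa [vecMul_neg] using hu)
  have hzA := hA _ (mem_spectrum_of_vecMul_eq_smul h.1
    (vecMul_eq_inv_smul_of_vecMul_smul_sub_one_eq_zero hu))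
  have hzα := hα _ (mem_spectrum_of_vecMul_eq_smul h.2
    (vecMul_eq_smul_of_vecMul_smul_one_sub_eq_zero hv))
  rw [norm_inv, inv_lt_one₀ (norm_pos_iff.2 hz)] at hzA
  linarith

variable {p q : ℕ}

/-- `[B, AB, …, A^(p-1) B]`, the column `l` of `A^j B` being indexed by `(j, l)`. -/
def controllabilityMatrix [Semiring K] (A : Matrix (Fin p) (Fin p) K)
    (B : Matrix (Fin p) (Fin q) K) : Matrix (Fin p) (Fin p × Fin q) K :=
  of fun i jl => (A ^ (jl.1 : ℕ) * B) i jl.2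

/-- The easy half of the Hautus test. -/
theorem eq_zero_of_vecMul_eq_smul_of_vecMul_eq_zero [Field K] {A : Matrix (Fin p) (Fin p) K}
    {B : Matrix (Fin p) (Fin q) K} (hAB : (controllabilityMatrix A B).rank = p)
    {x : Fin p → K} {c : K} (hx : x ᵥ* A = c • x) (hxB : x ᵥ* B = 0) : x = 0 := by
  have hinj : Function.Injective (controllabilityMatrix A B).vecMul := by
    rw [vecMul_injective_iff_rank_eq_card, hAB, Fintype.card_fin]
  have hpow (j : ℕ) : x ᵥ* A ^ j = c ^ j • x := by
    induction j with
    | zero => simp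
    | succ j ih => rw [pow_succ, ← vecMul_vecMul, ih, smul_vecMul, hx, smul_smul, pow_succ]
  refine hinj ?_
  ext ⟨j, l⟩
  have hxAB : x ᵥ* (A ^ (j : ℕ) * B) = 0 := by
    rw [← vecMul_vecMul, hpow, smul_vecMul, hxB, smul_zero]
  simpa [controllabilityMatrix, vecMul, dotProduct] using congrFun hxAB l

theorem sumElim_vecMul_fromCols_fromBlocks_eq_zero_iff {m₁ m₂ : Type*} [CommRing K]
    [Fintype m₁] [Fintype m₂] (P : Matrix m₁ m₁ K) (Q : Matrix m₂ m₂ K) (B : Matrix m₁ n K)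
    (C : Matrix m₂ n K) (u : m₁ → K) (v : m₂ → K) :
    Sum.elim u v ᵥ* fromCols (fromBlocks P 0 0 Q) (fromRows B C) = 0 ↔
      u ᵥ* P = 0 ∧ v ᵥ* Q = 0 ∧ u ᵥ* B + v ᵥ* C = 0 := by
  rw [vecMul_fromCols, vecMul_fromBlocks, sumElim_vecMul_fromRows]
  simp only [Sum.elim_comp_inl, Sum.elim_comp_inr, vecMul_zero, add_zero, zero_add,
    ← Sum.elim_zero_zero, Sum.elim_eq_iff, and_assoc]

end Matrix

theorem stmt_11 (n k m : ℕ)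
    (A : Matrix (Fin n) (Fin n) ℂ) (B : Matrix (Fin n) (Fin m) ℂ)
    (α : Matrix (Fin k) (Fin k) ℂ) (β : Matrix (Fin k) (Fin m) ℂ)
    (hA : ∀ μ ∈ spectrum ℂ A, ‖μ‖ < 1)
    (hα : ∀ μ ∈ spectrum ℂ α, ‖μ‖ ≤ 1)
    (hAB : (Matrix.of fun (i : Fin n) (jl : Fin n × Fin m) =>
        (A ^ (jl.1 : ℕ) * B) i jl.2).rank = n)
    (hαβ : (Matrix.of fun (i : Fin k) (jl : Fin k × Fin m) =>
        (α ^ (jl.1 : ℕ) * β) i jl.2).rank = k)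
    (z : ℂ) :
    (Matrix.fromCols
        (Matrix.fromBlocks (z • A - 1) 0 0 (z • (1 : Matrix (Fin k) (Fin k) ℂ) - α))
        (Matrix.fromRows B β)).rank = n + k := by
  refine ((vecMul_injective_iff_rank_eq_card _).1 ?_).trans (by simp)
  rw [← coe_vecMulLinear, injective_iff_map_eq_zero]
  intro x hx
  obtain ⟨u, v, rfl⟩ : ∃ u v, x = Sum.elim u v := ⟨_, _, (Sum.elim_comp_inl_inr x).symm⟩
  rw [coe_vecMulLinear, sumElim_vecMul_fromCols_fromBlocks_eq_zero_iff] at hx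
  obtain ⟨hu, hv, huv⟩ := hx
  rcases eq_zero_or_eq_zero_of_vecMul_smul_sub_eq_zero hA hα hu hv with rfl | rfl
  · rw [eq_zero_of_vecMul_eq_smul_of_vecMul_eq_zero hαβ
      (vecMul_eq_smul_of_vecMul_smul_one_sub_eq_zero hv) (by simpa using huv)]
    exact Sum.elim_zero_zero
  · rw [eq_zero_of_vecMul_eq_smul_of_vecMul_eq_zero hAB
      (vecMul_eq_inv_smul_of_vecMul_smul_sub_one_eq_zero hu) (by simpa using huv)]
    exact Sum.elim_zero_zero
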